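/- arXiv:2204.01191 — 2 statements merged into one kernel-verified Lean document; each statement's English description precedes it below -/
import Mathlib

section
/- Let f : ℝⁿ → ℝ ∪ {+∞} have the descent property on ℝⁿ with constant L > 0, let μ ∈ (0, 1), and let x, w ∈ ℝⁿ with ‖w‖ ≤ 1 and d := df(x)(w) < 0. Suppose the step size α > 0 is produced by Armijo backtracking, i.e. either α = 1 and f(x + α w) − f(x) < (α/2) d, or α < 1 satisfies f(x + α w) − f(x) < (α/2) d while α/μ fails the test: f(x + (α/μ) w) − f(x) ≥ (α/(2μ)) d. Then the sufficient decrease inequality holds: f(x + α w) − f(x) ≤ −M · min{|d|, d²}, where M := min{1/2, μ/(2L)}. -/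
/-! If `α < 1`, the step `β = α / μ` was rejected. The descent property at `x + β • w`, together
with positive homogeneity of the subderivative, bounds the rejected decrease by
`β d + (L/2) β² ‖w‖²`, so `β d / 2 ≤ β d + (L/2) β²`, i.e. `α ≥ μ |d| / L`. In either case
`α ≥ min 1 (μ |d| / L)`, and the accepted Armijo decrease `(α/2) |d|` is then at least
`M · min |d| d²`. -/

open Filter Topology Set

/-- The subderivative `df(x̄)(w) := liminf_{t↓0, w'→w} (f(x̄ + t w') − f(x̄))/t`
of an extended-real-valued function. -/
noncomputable def subderiv {n : ℕ} (f : EuclideanSpace ℝ (Fin n) → EReal)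
    (x w : EuclideanSpace ℝ (Fin n)) : EReal :=
  Filter.liminf
    (fun p : ℝ × EuclideanSpace ℝ (Fin n) =>
      (((p.1)⁻¹ : ℝ) : EReal) * (f (x + p.1 • p.2) - f x))
    ((𝓝[>] (0:ℝ)) ×ˢ 𝓝 w)

/-- `F` is semi-differentiable at `x` for the direction `w` with semi-derivative `d`:
`d = lim_{t↓0, w'→w} (F(x + t w') − F(x))/t`. -/
def HasSemiderivAt {E V : Type*} [NormedAddCommGroup E] [NormedSpace ℝ E]
    [NormedAddCommGroup V] [NormedSpace ℝ V]
    (F : E → V) (x w : E) (d : V) : Prop :=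
  Filter.Tendsto (fun p : ℝ × E => (p.1)⁻¹ • (F (x + p.1 • p.2) - F x))
    ((𝓝[>] (0:ℝ)) ×ˢ 𝓝 w) (𝓝 d)

/-- `f` has the descent property on `Ω` with constant `L`:
`f(y) ≤ f(x) + df(x)(y − x) + (L/2)‖y − x‖²` for all `x, y ∈ Ω`. -/
def DescentPropOn {n : ℕ} (f : EuclideanSpace ℝ (Fin n) → EReal)
    (Ω : Set (EuclideanSpace ℝ (Fin n))) (L : ℝ) : Prop :=
  ∀ x ∈ Ω, ∀ y ∈ Ω,
    f y ≤ f x + subderiv f x (y - x) + (((L / 2) * ‖y - x‖ ^ 2 : ℝ) : EReal)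

lemma EReal.add_sub_cancel_left_le (a b : EReal) : a + b - a ≤ b := by
  induction a with
  | bot => simp
  | top => simp
  | coe a => rw [EReal.add_sub_cancel_left]

section

variable {n : ℕ} {f : EuclideanSpace ℝ (Fin n) → EReal} {x : EuclideanSpace ℝ (Fin n)}

lemma subderiv_smul_le {c : ℝ} (hc : 0 < c) (w : EuclideanSpace ℝ (Fin n)) :
    subderiv f x (c • w) ≤ (c : EReal) * subderiv f x w := by
  set u := fun p : ℝ × EuclideanSpace ℝ (Fin n) =>
    (((p.1)⁻¹ : ℝ) : EReal) * (f (x + p.1 • p.2) - f x)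
  -- Substituting `(t, w') ↦ (t / c, c • w')` scales the difference quotients by `c`.
  have hrescale : Tendsto (Prod.map (c⁻¹ * ·) (c • ·))
      ((𝓝[>] (0:ℝ)) ×ˢ 𝓝 w) ((𝓝[>] (0:ℝ)) ×ˢ 𝓝 (c • w)) :=
    (tendsto_iff_comap.2 (comap_mulLeft_nhdsGT_zero (inv_pos.2 hc)).ge).prodMap
      ((continuous_const_smul c).tendsto w)
  have hcomp : u ∘ Prod.map (c⁻¹ * ·) (c • ·) = fun p => (c : EReal) * u p := by
    ext ⟨t, v⟩
    simp only [u, Function.comp_apply, Prod.map_fst, Prod.map_snd, smul_smul,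
      mul_inv, inv_inv, EReal.coe_mul, mul_assoc]
    rw [mul_comm t c, inv_mul_cancel_left₀ hc.ne']
  calc subderiv f x (c • w) ≤ liminf (u ∘ Prod.map (c⁻¹ * ·) (c • ·)) ((𝓝[>] 0) ×ˢ 𝓝 w) :=
        hrescale.liminf_le_liminf_comp
    _ = (c : EReal) * subderiv f x w := by
        rw [hcomp, EReal.liminf_const_mul_of_nonneg_of_ne_top (by exact_mod_cast hc.le)
          (EReal.coe_ne_top c)]
        rfl

lemma subderiv_smul {c : ℝ} (hc : 0 < c) (w : EuclideanSpace ℝ (Fin n)) :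
    subderiv f x (c • w) = (c : EReal) * subderiv f x w := by
  refine (subderiv_smul_le hc w).antisymm ?_
  have h := subderiv_smul_le (f := f) (x := x) (inv_pos.2 hc) (c • w)
  rw [inv_smul_smul₀ hc.ne'] at h
  calc (c : EReal) * subderiv f x w ≤ (c : EReal) * ((c⁻¹ : ℝ) * subderiv f x (c • w)) :=
        mul_le_mul_of_nonneg_left h (by exact_mod_cast hc.le)
    _ = subderiv f x (c • w) := by
        rw [← mul_assoc, ← EReal.coe_mul, mul_inv_cancel₀ hc.ne', EReal.coe_one, one_mul]

lemma DescentPropOn.sub_le {Ω : Set (EuclideanSpace ℝ (Fin n))} {L : ℝ}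
    (h : DescentPropOn f Ω L) {y : EuclideanSpace ℝ (Fin n)} (hx : x ∈ Ω) (hy : y ∈ Ω) :
    f y - f x ≤ subderiv f x (y - x) + (((L / 2) * ‖y - x‖ ^ 2 : ℝ) : EReal) :=
  calc f y - f x
      ≤ f x + (subderiv f x (y - x) + (((L / 2) * ‖y - x‖ ^ 2 : ℝ) : EReal)) - f x :=
        EReal.sub_le_sub (by rw [← add_assoc]; exact h x hx y hy) le_rfl
    _ ≤ _ := EReal.add_sub_cancel_left_le _ _

end

def ArmijoAccepts {n : ℕ} (f : EuclideanSpace ℝ (Fin n) → EReal)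
    (x w : EuclideanSpace ℝ (Fin n)) (d α : ℝ) : Prop :=
  f (x + α • w) - f x < ((α / 2 * d : ℝ) : EReal)

lemma neg_le_of_not_armijoAccepts {n : ℕ} {f : EuclideanSpace ℝ (Fin n) → EReal} {L : ℝ}
    (hdesc : DescentPropOn f univ L) {x w : EuclideanSpace ℝ (Fin n)} {d β : ℝ}
    (hd : subderiv f x w = d) (hβ : 0 < β) (hfail : ¬ ArmijoAccepts f x w d β) :
    -d ≤ L * β * ‖w‖ ^ 2 := by
  have h := (not_lt.1 hfail).trans (hdesc.sub_le (mem_univ x) (mem_univ (x + β • w)))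
  rw [add_sub_cancel_left, subderiv_smul hβ, hd, norm_smul, Real.norm_of_nonneg hβ.le,
    ← EReal.coe_mul, ← EReal.coe_add, EReal.coe_le_coe_iff] at h
  have hprod : 0 ≤ β / 2 * (d + L * β * ‖w‖ ^ 2) := by linear_combination h
  linarith [(mul_nonneg_iff_of_pos_left (half_pos hβ)).1 hprod]

lemma min_mul_min_le_half_mul_abs {L μ d α : ℝ} (hL : 0 < L) (hμ : 0 ≤ μ)
    (hα : 1 ≤ α ∨ μ * |d| ≤ L * α) :
    min (1 / 2) (μ / (2 * L)) * min |d| (d ^ 2) ≤ α / 2 * |d| := by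
  have hmin : 0 ≤ min |d| (d ^ 2) := le_min (abs_nonneg d) (sq_nonneg d)
  rcases hα with hα | hα
  · calc min (1 / 2) (μ / (2 * L)) * min |d| (d ^ 2) ≤ 1 / 2 * |d| :=
          mul_le_mul (min_le_left _ _) (min_le_left _ _) hmin (by norm_num)
      _ ≤ α / 2 * |d| := by gcongr
  · calc min (1 / 2) (μ / (2 * L)) * min |d| (d ^ 2) ≤ μ / (2 * L) * d ^ 2 :=
          mul_le_mul (min_le_right _ _) (min_le_right _ _) hmin (by positivity)
      _ = μ * |d| / (2 * L) * |d| := by rw [← sq_abs]; ring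
      _ ≤ L * α / (2 * L) * |d| := by gcongr
      _ = α / 2 * |d| := by field_simp

theorem armijo_sufficient_decrease_general {n : ℕ}
    (f : EuclideanSpace ℝ (Fin n) → EReal)
    (L : ℝ) (hL : 0 < L)
    (hdesc : DescentPropOn f Set.univ L)
    (μ : ℝ) (hμ : μ ∈ Set.Ioo (0:ℝ) 1)
    (x w : EuclideanSpace ℝ (Fin n)) (hw : ‖w‖ ≤ 1)
    (d : ℝ) (hd : subderiv f x w = ((d : ℝ) : EReal)) (hdneg : d < 0)
    (α : ℝ)
    -- `α` is produced by Armijo backtracking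
    (harmijo :
      (α = 1 ∧ f (x + α • w) - f x < ((α / 2 * d : ℝ) : EReal)) ∨
      (α < 1 ∧ 0 < α ∧ f (x + α • w) - f x < ((α / 2 * d : ℝ) : EReal) ∧
        ¬ (f (x + (α / μ) • w) - f x < ((α / (2 * μ) * d : ℝ) : EReal)))) :
    f (x + α • w) - f x ≤
      ((-(min (1/2) (μ / (2 * L)) * min |d| (d ^ 2)) : ℝ) : EReal) := by
  obtain ⟨hμ0, -⟩ := hμ
  have hpass : ArmijoAccepts f x w d α := by
    rcases harmijo with ⟨-, h⟩ | ⟨-, -, h, -⟩ <;> exact h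
  have hstep : 1 ≤ α ∨ μ * |d| ≤ L * α := by
    rcases harmijo with ⟨rfl, -⟩ | ⟨-, hα, -, hfail⟩
    · exact .inl le_rfl
    have hfail' : ¬ ArmijoAccepts f x w d (α / μ) := by
      rwa [ArmijoAccepts, div_div, mul_comm μ]
    have h := neg_le_of_not_armijoAccepts hdesc hd (div_pos hα hμ0) hfail'
    right
    calc μ * |d| ≤ μ * (L * (α / μ) * ‖w‖ ^ 2) := by
          rw [abs_of_neg hdneg]; exact mul_le_mul_of_nonneg_left h hμ0.le
      _ ≤ μ * (L * (α / μ)) := mul_le_mul_of_nonneg_left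
          (mul_le_of_le_one_right (by positivity) (pow_le_one₀ (norm_nonneg w) hw)) hμ0.le
      _ = L * α := by field_simp [hμ0.ne']
  have hbound := min_mul_min_le_half_mul_abs hL hμ0.le hstep
  have habs : α / 2 * d = -(α / 2 * |d|) := by rw [abs_of_neg hdneg]; ring
  exact hpass.le.trans (EReal.coe_le_coe_iff.2 (by rw [habs]; linarith))

/-- sufficient decrease for a step size produced by Armijo backtracking.
If `f` has the descent property on `ℝⁿ` with constant `L > 0`, `‖w‖ ≤ 1`,
`d = df(x)(w) < 0`, and `α` is produced by Armijo backtracking with reduction multiple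
`μ ∈ (0,1)` (either `α = 1` passes the test, or `α < 1` passes while `α/μ` fails),
then `f(x + α w) − f(x) ≤ −M·min{|d|, d²}` with `M = min{1/2, μ/(2L)}`. -/
theorem armijo_sufficient_decrease {n : ℕ}
    (f : EuclideanSpace ℝ (Fin n) → EReal)
    -- `f` takes values in ℝ ∪ {+∞}
    (hf_ne_bot : ∀ z, f z ≠ ⊥)
    (L : ℝ) (hL : 0 < L)
    (hdesc : DescentPropOn f Set.univ L)
    (μ : ℝ) (hμ : μ ∈ Set.Ioo (0:ℝ) 1)
    (x w : EuclideanSpace ℝ (Fin n)) (hw : ‖w‖ ≤ 1)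
    (d : ℝ) (hd : subderiv f x w = ((d : ℝ) : EReal)) (hdneg : d < 0)
    (α : ℝ)
    -- `α` is produced by Armijo backtracking
    (harmijo :
      (α = 1 ∧ f (x + α • w) - f x < ((α / 2 * d : ℝ) : EReal)) ∨
      (α < 1 ∧ 0 < α ∧ f (x + α • w) - f x < ((α / 2 * d : ℝ) : EReal) ∧
        ¬ (f (x + (α / μ) • w) - f x < ((α / (2 * μ) * d : ℝ) : EReal)))) :
    f (x + α • w) - f x ≤
      ((-(min (1/2) (μ / (2 * L)) * min |d| (d ^ 2)) : ℝ) : EReal) :=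
  armijo_sufficient_decrease_general f L hL hdesc μ hμ x w hw d hd hdneg α harmijo
end

section
/- Let f : ℝⁿ → ℝ ∪ {+∞} be bounded below by f*, let x_0 ∈ ℝⁿ, and set Ω := {x : f(x) ≤ f(x_0)}. Assume f is semi-differentiable at every point of Ω and has the descent property on Ω + B (the sublevel set fattened by the closed unit ball) with constant L > 0. Let (x_k) and (w_k) satisfy x_{k+1} = x_k + α_k w_k with ‖w_k‖ ≤ 1, d_k := df(x_k)(w_k) < 0, and each α_k produced by Armijo backtracking with reduction multiple μ ∈ (0, 1): either α_k = 1 passes the test, or α_k passes while α_k/μ fails. Set M := min{1/2, μ/(2L)}. Then x_k ∈ Ω for all k, and for every N with min_{0 ≤ k ≤ N} min{|d_k|, d_k²} < 1 the bound min_{0 ≤ k ≤ N} |d_k| ≤ √((f(x_0) − f*)/(M(N + 1))) holds. -/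
/-!
The subderivative is positively homogeneous, so at an iterate `x` with direction `w` and
`d = df(x)(w) < 0` the descent property gives `f(x + t w) ≤ f(x) + t d + L t² / 2` whenever
`x + t w ∈ Ω + B`. As long as `L t < |d|` the right-hand side is below `f(x) + t d / 2`, so
such a point lies in `Ω`, and since `‖w‖ ≤ 1` the point one unit further along the ray lies in
`Ω + B` again; walking along the ray shows that every step `t` with `L t < |d|` passes the
Armijo test. A backtracked step therefore satisfies `α ≥ μ |d| / L`, and each iteration
decreases `f` by at least `M min{|d_k|, d_k²}`. Summing over `k ≤ N` against
`f(x_{N+1}) ≥ f*` bounds the smallest of these quantities, which is `d_k²` once it is below 1.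
-/

open Filter Topology Set

open Pointwise

section Subderivative

variable {n : ℕ} {f : EuclideanSpace ℝ (Fin n) → EReal} {x w : EuclideanSpace ℝ (Fin n)}

theorem subderiv_eq_bot_of_eq_top (h : f x = ⊤) : subderiv f x w = ⊥ := by
  refine le_bot_iff.1 (liminf_le_of_frequently_le' (Eventually.frequently ?_))
  filter_upwards [(eventually_mem_nhdsWithin (s := Ioi (0:ℝ))).prod_inl (𝓝 w)] with p hp
  rw [h, EReal.sub_top, EReal.coe_mul_bot_of_pos (inv_pos.2 hp)]

theorem coe_mul_subderiv_le_subderiv_smul {s : ℝ} (hs : 0 < s) :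
    (s : EReal) * subderiv f x w ≤ subderiv f x (s • w) := by
  set Φ : ℝ × EuclideanSpace ℝ (Fin n) → ℝ × EuclideanSpace ℝ (Fin n) :=
    Prod.map (s * ·) (s⁻¹ • ·)
  have hΦ : Tendsto Φ (𝓝[>] 0 ×ˢ 𝓝 (s • w)) (𝓝[>] 0 ×ˢ 𝓝 w) := by
    refine Tendsto.prodMap ?_ ?_
    · exact tendsto_nhdsWithin_of_tendsto_nhds_of_eventually_within _
        (((continuous_const_mul s).tendsto' 0 0 (mul_zero s)).mono_left nhdsWithin_le_nhds)
        (eventually_nhdsWithin_of_forall fun t ht => mul_pos hs ht)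
    · simpa [inv_smul_smul₀ hs.ne'] using (continuous_const_smul s⁻¹).tendsto (s • w)
  unfold subderiv
  rw [← EReal.liminf_const_mul_of_nonneg_of_ne_top (EReal.coe_nonneg.2 hs.le)
    (EReal.coe_ne_top s)]
  refine (liminf_le_liminf_of_le hΦ).trans_eq ((liminf_comp _ Φ _).symm.trans (liminf_congr ?_))
  filter_upwards [(eventually_mem_nhdsWithin (s := Ioi (0:ℝ))).prod_inl (𝓝 (s • w))]
    with p hp
  have harg : (s * p.1) • (s⁻¹ • p.2) = p.1 • p.2 := by
    rw [smul_smul, mul_comm s, mul_assoc, mul_inv_cancel₀ hs.ne', mul_one]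
  have hcoef : s * (s * p.1)⁻¹ = p.1⁻¹ := by
    rw [mul_inv, ← mul_assoc, mul_inv_cancel₀ hs.ne', one_mul]
  change (s : EReal) * (((s * p.1)⁻¹ : ℝ) * (f (x + (s * p.1) • (s⁻¹ • p.2)) - f x)) = _
  rw [harg, ← mul_assoc, ← EReal.coe_mul, hcoef]

theorem subderiv_smul_s18 {s : ℝ} (hs : 0 < s) :
    subderiv f x (s • w) = s * subderiv f x w := by
  refine le_antisymm ?_ (coe_mul_subderiv_le_subderiv_smul hs)
  have h := mul_le_mul_of_nonneg_left
    (coe_mul_subderiv_le_subderiv_smul (f := f) (x := x) (w := s • w) (inv_pos.2 hs))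
    (EReal.coe_nonneg.2 hs.le)
  rwa [inv_smul_smul₀ hs.ne', ← mul_assoc, ← EReal.coe_mul, mul_inv_cancel₀ hs.ne',
    EReal.coe_one, one_mul] at h

end Subderivative

theorem add_smul_mem_of_forall_mem_add_closedBall {E : Type*} [SeminormedAddCommGroup E]
    [NormedSpace ℝ E] {Ω : Set E} {x w : E} {s : ℝ} (hx : x ∈ Ω) (hw : ‖w‖ ≤ 1)
    (hstep : ∀ t ∈ Ioc 0 s, x + t • w ∈ Ω + Metric.closedBall 0 1 → x + t • w ∈ Ω) :
    ∀ t ∈ Icc 0 s, x + t • w ∈ Ω := by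
  suffices h : ∀ m : ℕ, ∀ t ∈ Icc 0 s, t ≤ m → x + t • w ∈ Ω by
    intro t ht
    obtain ⟨m, hm⟩ := exists_nat_ge t
    exact h m t ht hm
  intro m
  induction m with
  | zero =>
    intro t ht htm
    rw [le_antisymm (by exact_mod_cast htm) ht.1, zero_smul, add_zero]
    exact hx
  | succ m ih =>
    intro t ht htm
    rcases le_or_gt t m with htm' | htm'
    · exact ih t ht htm'
    set t' := max (t - 1) 0
    have ht't : t' ≤ t := max_le (by linarith) ht.1
    have ht'' : t - 1 ≤ t' := le_max_left _ _
    have ht' : t' ∈ Icc 0 s := ⟨le_max_right _ _, ht't.trans ht.2⟩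
    have hstep_len : ‖(t - t') • w‖ ≤ 1 := by
      rw [norm_smul, Real.norm_of_nonneg (by linarith)]
      exact mul_le_one₀ (by linarith) (norm_nonneg w) hw
    refine hstep t ⟨(m.cast_nonneg).trans_lt htm', ht.2⟩ ?_
    have h := add_mem_add (ih t' ht' (max_le (by push_cast at htm; linarith) m.cast_nonneg))
      (mem_closedBall_zero_iff.2 hstep_len)
    rwa [add_assoc, ← add_smul, add_sub_cancel] at h

namespace DescentPropOn

variable {n : ℕ} {f : EuclideanSpace ℝ (Fin n) → EReal} {c : EReal} {L r d : ℝ}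
  {x w : EuclideanSpace ℝ (Fin n)}

theorem armijo_of_mem_add_closedBall
    (hdesc : DescentPropOn f ({z | f z ≤ c} + Metric.closedBall 0 1) L)
    (hL : 0 ≤ L) (hx : f x ≤ c) (hr : f x = r) (hw : ‖w‖ ≤ 1) (hd : subderiv f x w = d)
    {t : ℝ} (ht : 0 < t) (hLt : L * t < -d)
    (hy : x + t • w ∈ {z | f z ≤ c} + Metric.closedBall 0 1) :
    f (x + t • w) < ((r + t / 2 * d : ℝ) : EReal) := by
  have h := hdesc x (subset_add_left _ (Metric.mem_closedBall_self zero_le_one) hx) _ hy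
  rw [add_sub_cancel_left, subderiv_smul_s18 ht, hd, hr, ← EReal.coe_mul, ← EReal.coe_add,
    ← EReal.coe_add] at h
  refine h.trans_lt (EReal.coe_lt_coe_iff.2 ?_)
  have htw : ‖t • w‖ ≤ t := by
    rw [norm_smul, Real.norm_of_nonneg ht.le]
    exact mul_le_of_le_one_right ht.le hw
  have hsq : L / 2 * ‖t • w‖ ^ 2 ≤ L / 2 * t ^ 2 := by
    gcongr
  nlinarith

theorem armijo_of_mul_lt (hdesc : DescentPropOn f ({z | f z ≤ c} + Metric.closedBall 0 1) L)
    (hL : 0 ≤ L) (hx : f x ≤ c) (hr : f x = r) (hw : ‖w‖ ≤ 1) (hd : subderiv f x w = d)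
    {s : ℝ} (hs : 0 < s) (hLs : L * s < -d) :
    f (x + s • w) - f x < ((s / 2 * d : ℝ) : EReal) := by
  have hstep : ∀ t ∈ Ioc 0 s, x + t • w ∈ {z | f z ≤ c} + Metric.closedBall 0 1 →
      f (x + t • w) ≤ c := fun t ht hy => by
    have hLt : L * t < -d := (mul_le_mul_of_nonneg_left ht.2 hL).trans_lt hLs
    refine ((armijo_of_mem_add_closedBall hdesc hL hx hr hw hd ht.1 hLt hy).le.trans ?_).trans hx
    rw [hr, EReal.coe_le_coe_iff]
    nlinarith [ht.1, mul_nonneg hL ht.1.le]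
  have hseg := add_smul_mem_of_forall_mem_add_closedBall (Ω := {z | f z ≤ c}) hx hw hstep s
    ⟨hs.le, le_rfl⟩
  have hy := subset_add_left _ (Metric.mem_closedBall_self zero_le_one) hseg
  rw [hr]
  exact EReal.sub_lt_of_lt_add' (by
    simpa using armijo_of_mem_add_closedBall hdesc hL hx hr hw hd hs hLs hy)

theorem mul_neg_le_mul_of_not_armijo
    (hdesc : DescentPropOn f ({z | f z ≤ c} + Metric.closedBall 0 1) L)
    (hL : 0 ≤ L) (hx : f x ≤ c) (hr : f x = r) (hw : ‖w‖ ≤ 1) (hd : subderiv f x w = d)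
    {μ α : ℝ} (hμ : 0 < μ) (hα : 0 < α)
    (hfail : ¬ f (x + (α / μ) • w) - f x < ((α / (2 * μ) * d : ℝ) : EReal)) :
    μ * -d ≤ L * α := by
  by_contra! h
  have hLs : L * (α / μ) < -d := by
    rw [mul_div_assoc', div_lt_iff₀ hμ]
    linarith
  refine hfail ?_
  convert armijo_of_mul_lt hdesc hL hx hr hw hd (div_pos hα hμ) hLs using 3
  ring

end DescentPropOn

theorem EReal.le_of_sub_lt_of_nonpos {a b : EReal} {c : ℝ} (h : a - b < c) (hc : c ≤ 0) :
    a ≤ b := by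
  induction b with
  | bot =>
    by_contra ha
    rw [EReal.sub_bot (ne_bot_of_gt (not_le.1 ha))] at h
    exact not_top_lt h
  | coe b =>
    rw [EReal.sub_lt_iff (.inl (EReal.coe_ne_bot b)) (.inl (EReal.coe_ne_top b))] at h
    exact h.le.trans (add_le_of_nonpos_left (EReal.coe_nonpos.2 hc))
  | top => exact le_top

theorem min_mul_min_abs_sq_le_of_armijo {r r' a d L μ : ℝ} (hL : 0 < L) (hμ : 0 ≤ μ)
    (hd : d < 0) (ha : a = 1 ∨ μ * -d ≤ L * a) (hdec : r' - r < a / 2 * d) :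
    min (1 / 2) (μ / (2 * L)) * min |d| (d ^ 2) ≤ r - r' := by
  have hg : 0 ≤ min |d| (d ^ 2) := le_min (abs_nonneg d) (sq_nonneg d)
  rcases ha with rfl | ha
  · have h : min (1 / 2) (μ / (2 * L)) * min |d| (d ^ 2) ≤ 1 / 2 * |d| :=
      mul_le_mul (min_le_left _ _) (min_le_left _ _) hg (by norm_num)
    linarith [abs_of_neg hd]
  · have h : min (1 / 2) (μ / (2 * L)) * min |d| (d ^ 2) ≤ μ / (2 * L) * d ^ 2 :=
      mul_le_mul (min_le_right _ _) (min_le_right _ _) hg (by positivity)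
    have hstep : μ / (2 * L) * d ^ 2 ≤ a / 2 * -d := by
      rw [div_mul_eq_mul_div, div_le_iff₀ (by positivity)]
      nlinarith
    linarith

theorem exists_abs_le_sqrt_of_decrease {R d : ℕ → ℝ} {M B : ℝ} (hM : 0 < M)
    (hdec : ∀ k, M * min |d k| (d k ^ 2) ≤ R k - R (k + 1)) (hB : ∀ k, B ≤ R k) (N : ℕ)
    (hsmall : ∃ k ≤ N, min |d k| (d k ^ 2) < 1) :
    ∃ k ≤ N, |d k| ≤ √((R 0 - B) / (M * (N + 1))) := by
  obtain ⟨k₀, hk₀, hmin⟩ := Finset.exists_min_image (Finset.range (N + 1))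
    (fun k => min |d k| (d k ^ 2)) Finset.nonempty_range_add_one
  have hlt : min |d k₀| (d k₀ ^ 2) < 1 := by
    obtain ⟨k, hkN, hk⟩ := hsmall
    exact (hmin k (Finset.mem_range_succ_iff.2 hkN)).trans_lt hk
  have hsq : min |d k₀| (d k₀ ^ 2) = d k₀ ^ 2 := by
    have habs : |d k₀| < 1 := by
      by_contra! h
      exact hlt.not_ge (le_min h (by nlinarith [sq_abs (d k₀)]))
    exact min_eq_right (by nlinarith [sq_abs (d k₀), abs_nonneg (d k₀)])
  have hsum : (N + 1) * (M * d k₀ ^ 2) ≤ R 0 - B := by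
    have h := Finset.card_nsmul_le_sum (Finset.range (N + 1)) (fun k => R k - R (k + 1))
      (M * d k₀ ^ 2) fun k hk =>
        hsq ▸ (mul_le_mul_of_nonneg_left (hmin k hk) hM.le).trans (hdec k)
    rw [Finset.sum_range_sub', Finset.card_range, nsmul_eq_mul] at h
    push_cast at h
    linarith [hB (N + 1)]
  refine ⟨k₀, Finset.mem_range_succ_iff.1 hk₀, ?_⟩
  rw [← Real.sqrt_sq_eq_abs]
  exact Real.sqrt_le_sqrt (by rw [le_div_iff₀ (by positivity)]; linarith)

theorem subderivative_descent_method_convergence_general {n : ℕ}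
    (f : EuclideanSpace ℝ (Fin n) → EReal)
    -- `f` takes values in ℝ ∪ {+∞} and is bounded below by `f*`
    (fstar : ℝ) (hbdd : ∀ z, (fstar : EReal) ≤ f z)
    (x w : ℕ → EuclideanSpace ℝ (Fin n)) (α : ℕ → ℝ) (d : ℕ → ℝ)
    (L : ℝ) (hL : 0 < L)
    -- descent property on the fattened sublevel set `Ω + B`
    (hdesc : DescentPropOn f
      ({z | f z ≤ f (x 0)} + Metric.closedBall (0 : EuclideanSpace ℝ (Fin n)) 1) L)
    (μ : ℝ) (hμ : μ ∈ Set.Ioo (0:ℝ) 1)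
    (hw : ∀ k, ‖w k‖ ≤ 1)
    (hd : ∀ k, subderiv f (x k) (w k) = ((d k : ℝ) : EReal))
    (hdneg : ∀ k, d k < 0)
    (hupd : ∀ k, x (k + 1) = x k + α k • w k)
    -- each `α_k` is produced by Armijo backtracking with reduction multiple `μ`
    (harmijo : ∀ k,
      (α k = 1 ∧ f (x k + α k • w k) - f (x k) < ((α k / 2 * d k : ℝ) : EReal)) ∨
      (α k < 1 ∧ 0 < α k ∧
        f (x k + α k • w k) - f (x k) < ((α k / 2 * d k : ℝ) : EReal) ∧
        ¬ (f (x k + (α k / μ) • w k) - f (x k) < ((α k / (2 * μ) * d k : ℝ) : EReal)))) :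
    (∀ k, f (x k) ≤ f (x 0)) ∧
      ∀ N : ℕ, (∃ k ≤ N, min |d k| ((d k) ^ 2) < 1) →
        ∃ k ≤ N, |d k| ≤
          Real.sqrt (((f (x 0)).toReal - fstar) / (min (1/2) (μ / (2 * L)) * (N + 1))) := by
  have hμ0 : 0 < μ := hμ.1
  have hx0 : f (x 0) ≠ ⊤ := fun h =>
    EReal.bot_ne_coe (d 0) (subderiv_eq_bot_of_eq_top h ▸ hd 0)
  have hα : ∀ k, 0 < α k := fun k => (harmijo k).elim (fun h => h.1 ▸ one_pos) (·.2.1)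
  have htest : ∀ k, f (x (k + 1)) - f (x k) < ((α k / 2 * d k : ℝ) : EReal) := fun k =>
    hupd k ▸ (harmijo k).elim (·.2) (·.2.2.1)
  have hmem : ∀ k, f (x k) ≤ f (x 0) := fun k =>
    antitone_nat_of_succ_le (f := fun k => f (x k))
      (fun k => EReal.le_of_sub_lt_of_nonpos (htest k)
        (mul_neg_of_pos_of_neg (half_pos (hα k)) (hdneg k)).le) (Nat.zero_le k)
  set R : ℕ → ℝ := fun k => (f (x k)).toReal
  have hR : ∀ k, f (x k) = R k := fun k =>
    (EReal.coe_toReal (ne_top_of_le_ne_top hx0 (hmem k))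
      (ne_bot_of_le_ne_bot (EReal.coe_ne_bot fstar) (hbdd _))).symm
  have hstep : ∀ k, α k = 1 ∨ μ * -d k ≤ L * α k := fun k =>
    (harmijo k).imp (·.1) fun h => hdesc.mul_neg_le_mul_of_not_armijo hL.le (hmem k) (hR k) (hw k)
      (hd k) hμ0 h.2.1 h.2.2.2
  have hdec : ∀ k, R (k + 1) - R k < α k / 2 * d k := fun k => by
    have h := htest k
    rwa [hR, hR, ← EReal.coe_sub, EReal.coe_lt_coe_iff] at h
  refine ⟨hmem, exists_abs_le_sqrt_of_decrease (by positivity)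
    (fun k => min_mul_min_abs_sq_le_of_armijo hL hμ0.le (hdneg k) (hstep k) (hdec k))
    (fun k => EReal.coe_le_coe_iff.1 (hR k ▸ hbdd _))⟩

/-- convergence of the subderivative descent method.  With
`Ω = {x | f(x) ≤ f(x_0)}`, if `f` is bounded below by `f*`, semi-differentiable at every
point of `Ω`, and has the descent property on `Ω + B` with constant `L > 0`, and the
iterates `x_{k+1} = x_k + α_k w_k` use directions with `‖w_k‖ ≤ 1`,
`d_k = df(x_k)(w_k) < 0`, and Armijo step sizes, then all iterates stay in `Ω`, and with
`M = min{1/2, μ/(2L)}`, for every `N` for which `min_{0 ≤ k ≤ N} min{|d_k|, d_k²} < 1`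
one has `min_{0 ≤ k ≤ N} |d_k| ≤ √((f(x_0) − f*)/(M(N+1)))`. -/
theorem subderivative_descent_method_convergence {n : ℕ}
    (f : EuclideanSpace ℝ (Fin n) → EReal)
    -- `f` takes values in ℝ ∪ {+∞} and is bounded below by `f*`
    (hf_ne_bot : ∀ z, f z ≠ ⊥)
    (fstar : ℝ) (hbdd : ∀ z, (fstar : EReal) ≤ f z)
    (x w : ℕ → EuclideanSpace ℝ (Fin n)) (α : ℕ → ℝ) (d : ℕ → ℝ)
    -- `f` is semi-differentiable at every point of `Ω = {z | f(z) ≤ f(x_0)}`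
    (hsemi : ∀ z, f z ≤ f (x 0) → ∀ u : EuclideanSpace ℝ (Fin n),
      Filter.Tendsto
        (fun q : ℝ × EuclideanSpace ℝ (Fin n) =>
          (((q.1)⁻¹ : ℝ) : EReal) * (f (z + q.1 • q.2) - f z))
        ((𝓝[>] (0:ℝ)) ×ˢ 𝓝 u) (𝓝 (subderiv f z u)))
    (L : ℝ) (hL : 0 < L)
    -- descent property on the fattened sublevel set `Ω + B`
    (hdesc : DescentPropOn f
      ({z | f z ≤ f (x 0)} + Metric.closedBall (0 : EuclideanSpace ℝ (Fin n)) 1) L)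
    (μ : ℝ) (hμ : μ ∈ Set.Ioo (0:ℝ) 1)
    (hw : ∀ k, ‖w k‖ ≤ 1)
    (hd : ∀ k, subderiv f (x k) (w k) = ((d k : ℝ) : EReal))
    (hdneg : ∀ k, d k < 0)
    (hupd : ∀ k, x (k + 1) = x k + α k • w k)
    -- each `α_k` is produced by Armijo backtracking with reduction multiple `μ`
    (harmijo : ∀ k,
      (α k = 1 ∧ f (x k + α k • w k) - f (x k) < ((α k / 2 * d k : ℝ) : EReal)) ∨
      (α k < 1 ∧ 0 < α k ∧
        f (x k + α k • w k) - f (x k) < ((α k / 2 * d k : ℝ) : EReal) ∧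
        ¬ (f (x k + (α k / μ) • w k) - f (x k) < ((α k / (2 * μ) * d k : ℝ) : EReal)))) :
    (∀ k, f (x k) ≤ f (x 0)) ∧
      ∀ N : ℕ, (∃ k ≤ N, min |d k| ((d k) ^ 2) < 1) →
        ∃ k ≤ N, |d k| ≤
          Real.sqrt (((f (x 0)).toReal - fstar) / (min (1/2) (μ / (2 * L)) * (N + 1))) :=
  subderivative_descent_method_convergence_general f fstar hbdd x w α d L hL hdesc μ hμ hw hd hdneg
    hupd harmijo
end
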